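/- arXiv:2203.00808 — 2 statements merged into one kernel-verified Lean document; each statement's English description precedes it below -/
import Mathlib

section
/- Let G be a group, H a subgroup of G, and B a right transversal of H in G that is also a twisted subgroup of G (i.e., 1 ∈ B and for all x,y ∈ B, x^{-1} ∈ B and xyx ∈ B). Then B with the operation b * b' := c, where c is the unique element of B such that bb' ∈ Hc, is a right Bol loop with identity 1. -/
/-- Baer correspondence: if `B` is a right transversal of a subgroup `H` of a
group `G` which is also a twisted subgroup of `G`, then `B` with the operation
`b * b' = c`, where `bb' = hc` with `h ∈ H`, `c ∈ B`, is a right Bol loop with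
identity `1`. -/
theorem rightBol_of_twisted_transversal (G : Type) [Group G]
    (H : Subgroup G) (B : Set G)
    (htrans : ∀ g : G, ∃! b, b ∈ B ∧ g * b⁻¹ ∈ H)
    (hone : (1 : G) ∈ B)
    (hinv : ∀ x ∈ B, x⁻¹ ∈ B)
    (htw : ∀ x ∈ B, ∀ y ∈ B, x * y * x ∈ B)
    (m : B → B → B)
    (hm : ∀ b b' : B, ((b : G) * (b' : G)) * ((m b b' : G))⁻¹ ∈ H) :
    (∀ x : B, m ⟨1, hone⟩ x = x) ∧
    (∀ x : B, m x ⟨1, hone⟩ = x) ∧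
    (∀ a b : B, ∃! x : B, m a x = b) ∧
    (∀ a b : B, ∃! y : B, m y a = b) ∧
    (∀ x y z : B, m x (m (m y z) y) = m (m (m x y) z) y) := by
  have uniq : ∀ (g : G) (b b' : B), g * (b : G)⁻¹ ∈ H → g * (b' : G)⁻¹ ∈ H → b = b' := by
    intro g b b' hb hb'
    obtain ⟨c, _, hcu⟩ := htrans g
    exact Subtype.ext ((hcu b ⟨b.2, hb⟩).trans (hcu b' ⟨b'.2, hb'⟩).symm)
  have mval : ∀ (b b' c : B), ((b : G) * (b' : G)) * (c : G)⁻¹ ∈ H → m b b' = c := by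
    intro b b' c h
    exact uniq ((b : G) * b') _ _ (hm b b') h
  refine ⟨?_, ?_, ?_, ?_, ?_⟩
  · intro x
    apply mval
    simp [H.one_mem]
  · intro x
    apply mval
    simp [H.one_mem]
  · intro a b
    obtain ⟨u, ⟨huB, huH⟩, huu⟩ := htrans ((b : G) * a)
    refine ⟨⟨(a : G)⁻¹ * u * (a : G)⁻¹, htw _ (hinv a a.2) u huB⟩, ?_, ?_⟩
    · apply mval
      have e : (a : G) * ((a : G)⁻¹ * u * (a : G)⁻¹) * ((b : G))⁻¹
          = ((b : G) * a * u⁻¹)⁻¹ := by group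
      rw [e]; exact H.inv_mem huH
    · intro x hx
      have hx' : (a : G) * x * (b : G)⁻¹ ∈ H := hx ▸ hm a x
      have hBu : (a : G) * x * a ∈ B := htw a a.2 x x.2
      have hH2 : ((b : G) * a) * ((a : G) * x * a)⁻¹ ∈ H := by
        have e : ((b : G) * a) * ((a : G) * x * a)⁻¹
            = ((a : G) * x * (b : G)⁻¹)⁻¹ := by group
        rw [e]; exact H.inv_mem hx'
      have he : (a : G) * x * a = u := huu _ ⟨hBu, hH2⟩
      apply Subtype.ext
      show (x : G) = (a : G)⁻¹ * u * (a : G)⁻¹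
      rw [← he]; group
  · intro a b
    obtain ⟨u, ⟨huB, huH⟩, huu⟩ := htrans ((b : G) * (a : G)⁻¹)
    refine ⟨⟨u, huB⟩, ?_, ?_⟩
    · apply mval
      have e : u * (a : G) * ((b : G))⁻¹ = ((b : G) * (a : G)⁻¹ * u⁻¹)⁻¹ := by group
      rw [e]; exact H.inv_mem huH
    · intro y hy
      have hy' : (y : G) * a * (b : G)⁻¹ ∈ H := hy ▸ hm y a
      apply Subtype.ext
      refine huu y ⟨y.2, ?_⟩
      have e : (b : G) * (a : G)⁻¹ * (y : G)⁻¹ = ((y : G) * a * (b : G)⁻¹)⁻¹ := by group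
      rw [e]; exact H.inv_mem hy'
  · intro x y z
    have hyzy : (y : G) * z * y ∈ B := htw y y.2 z z.2
    have h1 : m (m y z) y = ⟨(y : G) * z * y, hyzy⟩ := by
      apply mval
      have e : ((m y z : G) * y) * ((y : G) * z * y)⁻¹
          = ((y : G) * z * (m y z : G)⁻¹)⁻¹ := by group
      rw [e]; exact H.inv_mem (hm y z)
    rw [h1]
    set p := m x y with hp
    set q := m p z with hq
    set r := m q y with hr
    apply mval
    have hH : ((x : G) * y * (p : G)⁻¹) * ((p : G) * z * (q : G)⁻¹)
        * ((q : G) * y * (r : G)⁻¹) ∈ H :=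
      H.mul_mem (H.mul_mem (hm x y) (hm p z)) (hm q y)
    have e : ((x : G) * y * (p : G)⁻¹) * ((p : G) * z * (q : G)⁻¹)
        * ((q : G) * y * (r : G)⁻¹)
        = (x : G) * ((y : G) * z * y) * (r : G)⁻¹ := by group
    rw [← e]; exact hH
end

section
/- Let X be a set, P(X) the free magma on X, C(X) = {uu, (uv)v : u,v ∈ P(X) ∪ {1}} and W(X) the set of elements of P(X) ∪ {1} having no subword in C(X). Define π: P(X) ∪ {1} → W(X) recursively by π(x) = x for x ∈ X, π(1) = 1, and for u, v ∈ W(X): π(uv) = 1 if u = v, π(uv) = a if u = av, π(uv) = uv if uv ∈ W(X), and in general π(uv) = π(π(u)π(v)). Then for all u, v ∈ P(X) ∪ {1}: π((uv)v) = π(u) and π(u(vv)) = π(u). -/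
inductive Wd (X : Type) : Type
  | one : Wd X
  | of : X → Wd X
  | mul : Wd X → Wd X → Wd X

namespace Wd

variable {X : Type}

/-- Product of possibly-empty words: the empty word `one` acts as identity;
otherwise the product is the formal (magma) product. -/
def cmul : Wd X → Wd X → Wd X
  | one, v => v
  | u, one => u
  | u, v => mul u v

/-- Number of letters of a word. -/
def len : Wd X → ℕ
  | one => 0
  | of _ => 1
  | mul u v => len u + len v

/-- The set of subwords of a word. -/
def Sub : Wd X → Set (Wd X)
  | one => {one}
  | of x => {of x}
  | mul u v => insert (mul u v) (Sub u ∪ Sub v)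

/-- `v ∈ W(X)`: `v` is an element of `P(X) ∪ {1}` (the empty word occurs only
as the whole word) having no subword of the form `uu` or `(uw)w`. -/
def InW (v : Wd X) : Prop :=
  (∀ w ∈ Sub v, w = one → v = one) ∧
  (∀ u : Wd X, mul u u ∉ Sub v) ∧
  (∀ u w : Wd X, mul (mul u w) w ∉ Sub v)

/-- Left-normed product of a list of words. -/
def prodL : List (Wd X) → Wd X
  | [] => one
  | a :: l => l.foldl cmul a

/-- The left-normed symmetric word `b₁b₂⋯b_k b_{k-1}⋯b₁` built from `[b₁,…,b_k]`. -/
def symW (l : List (Wd X)) : Wd X := prodL (l ++ l.reverse.tail)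

/-- `lpad a l` is the left-normed product `a·l₁⋯lₙ`, with the convention that
`1·l₁⋯lₙ` means `l₁⋯lₙ`. -/
def lpad (a : Wd X) (l : List (Wd X)) : Wd X :=
  match a with
  | one => prodL l
  | _ => prodL (a :: l)

/-- Specification of the reduction map `π : P(X) ∪ {1} → W(X)`. -/
structure PiSpec (π : Wd X → Wd X) : Prop where
  map_one : π one = one
  map_of : ∀ x : X, π (of x) = of x
  mem_W : ∀ v, InW (π v)
  fix : ∀ v, InW v → π v = v
  cancel_sq : ∀ u, InW u → π (mul u u) = one
  cancel : ∀ a v, InW (mul a v) → π (mul (mul a v) v) = a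
  keep : ∀ u v, InW u → InW v → InW (mul u v) → π (mul u v) = mul u v
  red : ∀ u v, π (mul u v) = π (cmul (π u) (π v))

lemma cmul_one' (u : Wd X) : cmul u one = u := by cases u <;> rfl

lemma one_cmul' (v : Wd X) : cmul one v = v := by cases v <;> rfl

lemma cmul_eq_mul {u v : Wd X} (hu : u ≠ one) (hv : v ≠ one) :
    cmul u v = mul u v := by
  cases u <;> cases v <;> simp_all [cmul]

lemma inW_one_of_mem {u : Wd X} (h : InW u) (h1 : one ∈ Sub u) : u = one :=
  h.1 one h1 rfl

lemma inW_mul {u v : Wd X} (hu : InW u) (hv : InW v) (hu1 : u ≠ one)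
    (hv1 : v ≠ one) (hne : u ≠ v) (hna : ∀ a, u ≠ mul a v) :
    InW (mul u v) := by
  refine ⟨?_, ?_, ?_⟩
  · intro w hw hwone
    exfalso
    subst hwone
    simp only [Sub, Set.mem_insert_iff, Set.mem_union] at hw
    rcases hw with h | h | h
    · exact nomatch h
    · exact hu1 (inW_one_of_mem hu h)
    · exact hv1 (inW_one_of_mem hv h)
  · intro a ha
    simp only [Sub, Set.mem_insert_iff, Set.mem_union] at ha
    rcases ha with h | h | h
    · injection h with h1 h2
      exact hne (h1.symm.trans h2)
    · exact hu.2.1 a h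
    · exact hv.2.1 a h
  · intro a w h
    simp only [Sub, Set.mem_insert_iff, Set.mem_union] at h
    rcases h with h | h | h
    · injection h with h1 h2
      exact hna a (by rw [← h1, ← h2])
    · exact hu.2.2 a w h
    · exact hv.2.2 a w h

lemma pi_sq (π : Wd X → Wd X) (hπ : PiSpec π) (v : Wd X) :
    π (mul v v) = one := by
  rw [hπ.red]
  by_cases h : π v = one
  · rw [h, one_cmul', hπ.map_one]
  · rw [cmul_eq_mul h h, hπ.cancel_sq _ (hπ.mem_W v)]

lemma pi_key (π : Wd X → Wd X) (hπ : PiSpec π) (u v : Wd X)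
    (hu : InW u) (hv : InW v) : π (cmul (π (cmul u v)) v) = u := by
  by_cases hv1 : v = one
  · subst hv1
    rw [cmul_one', cmul_one', hπ.fix u hu, hπ.fix u hu]
  by_cases hu1 : u = one
  · subst hu1
    rw [one_cmul', hπ.fix v hv, cmul_eq_mul hv1 hv1, hπ.cancel_sq v hv]
  rw [cmul_eq_mul hu1 hv1]
  by_cases heq : u = v
  · subst heq
    rw [hπ.cancel_sq u hu, one_cmul', hπ.fix u hu]
  by_cases hav : ∃ a, u = mul a v
  · obtain ⟨a, rfl⟩ := hav
    have ha1 : a ≠ one := by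
      intro h
      subst h
      have h1 : one ∈ Sub (mul (one : Wd X) v) := by simp [Sub]
      exact nomatch (inW_one_of_mem hu h1)
    rw [hπ.cancel a v hu, cmul_eq_mul ha1 hv1, hπ.fix _ hu]
  · have hW := inW_mul hu hv hu1 hv1 heq (fun a h => hav ⟨a, h⟩)
    rw [hπ.fix _ hW, cmul_eq_mul (by simp) hv1]
    exact hπ.cancel u v hW

end Wd

open Wd in
/-- `π((uv)v) = π(u)` and `π(u(vv)) = π(u)` for all `u, v ∈ P(X) ∪ {1}`. -/
theorem pi_cancel_right {X : Type} (π : Wd X → Wd X) (hπ : PiSpec π)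
    (u v : Wd X) :
    π (cmul (cmul u v) v) = π u ∧ π (cmul u (cmul v v)) = π u := by
  constructor
  · by_cases hv1 : v = one
    · subst hv1
      rw [cmul_one', cmul_one']
    by_cases hu1 : u = one
    · subst hu1
      rw [one_cmul', cmul_eq_mul hv1 hv1, pi_sq π hπ, hπ.map_one]
    · rw [cmul_eq_mul hu1 hv1, cmul_eq_mul (by simp) hv1,
        hπ.red (mul u v) v, hπ.red u v]
      exact pi_key π hπ (π u) (π v) (hπ.mem_W u) (hπ.mem_W v)
  · by_cases hv1 : v = one
    · subst hv1
      rw [one_cmul', cmul_one']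
    rw [cmul_eq_mul hv1 hv1]
    by_cases hu1 : u = one
    · subst hu1
      rw [one_cmul', pi_sq π hπ, hπ.map_one]
    · rw [cmul_eq_mul hu1 (by simp), hπ.red, pi_sq π hπ, cmul_one',
        hπ.fix _ (hπ.mem_W u)]
end
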